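/- Let q be a prime power and n ≥ 0. For any conjugacy class C of GL(n+1, F_q), and for each a ∈ F_q^* let f_a denote the dimension over F_q of ker(β − aI) ⊆ F_q^{n+1} for any element β of C (this is the same for all β in C). Then the number of elements of the maximal parabolic subgroup P(n,q) that lie in C equals (|P(n,q)|/(q−1)) · (Σ_{a ∈ F_q^*} (q^{f_a} − 1)) · |C| / |GL(n+1,q)|. -/

import Mathlib

open Matrix

/-- Membership in the maximal parabolic subgroup `P(n,q)`: invertible `(n+1) × (n+1)`
matrices with `x_{11} ≠ 0` and `x_{j1} = 0` for `j ≥ 2` (indices starting at `0` in Lean). -/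
def IsPar {F : Type} [Field F] {n : ℕ} (x : GL (Fin (n + 1)) F) : Prop :=
  x.val 0 0 ≠ 0 ∧ ∀ j : Fin (n + 1), j ≠ 0 → x.val j 0 = 0

section Aux

variable {F : Type} [Field F] [Fintype F] [DecidableEq F] {n : ℕ}

/-- A generic counting lemma: if the witness `i` in `∃ i, P i c` is unique, the number of
`c` satisfying `∃ i, P i c` is the sum over `i` of the number of `c` satisfying `P i c`. -/
lemma nat_card_exists_eq_sum {ι γ : Type*} [Fintype ι] [Finite γ] (P : ι → γ → Prop)
    (h : ∀ i j c, P i c → P j c → i = j) :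
    Nat.card {c : γ // ∃ i, P i c} = ∑ i : ι, Nat.card {c : γ // P i c} := by
  classical
  have : Fintype γ := Fintype.ofFinite γ
  have e : (Σ i : ι, {c : γ // P i c}) ≃ {c : γ // ∃ i, P i c} := by
    refine Equiv.ofBijective (fun s => ⟨s.2.1, ⟨s.1, s.2.2⟩⟩) ⟨?_, ?_⟩
    · rintro ⟨i, c, hc⟩ ⟨j, d, hd⟩ heq
      obtain rfl : c = d := congrArg Subtype.val heq
      obtain rfl : i = j := h i j c hc hd
      rfl
    · rintro ⟨c, i, hc⟩; exact ⟨⟨i, c, hc⟩, rfl⟩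
  rw [← Nat.card_congr e, Nat.card_eq_fintype_card, Fintype.card_sigma]
  simp [Nat.card_eq_fintype_card]

/-- Generic fibering of a subtype of a product over the first coordinate. -/
def sigmaFst {α β : Type*} (Q : α → Prop) (R : α → β → Prop) :
    {p : α × β // Q p.1 ∧ R p.1 p.2} ≃ Σ x : {x : α // Q x}, {v : β // R x.val v} where
  toFun p := ⟨⟨p.1.1, p.2.1⟩, ⟨p.1.2, p.2.2⟩⟩
  invFun s := ⟨(s.1.1, s.2.1), ⟨s.1.2, s.2.2⟩⟩
  left_inv p := rfl
  right_inv s := rfl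

/-- Generic fibering of a subtype of a product over the second coordinate. -/
def sigmaSnd {α β : Type*} (Q : α → Prop) (R : α → β → Prop) :
    {p : α × β // Q p.1 ∧ R p.1 p.2} ≃ Σ v : {v : β // ∃ x, Q x ∧ R x v},
      {x : {x : α // Q x} // R x.val v.val} where
  toFun p := ⟨⟨p.1.2, ⟨p.1.1, p.2.1, p.2.2⟩⟩, ⟨⟨p.1.1, p.2.1⟩, p.2.2⟩⟩
  invFun s := ⟨(s.2.1.1, s.1.1), ⟨s.2.1.2, s.2.2⟩⟩
  left_inv p := rfl
  right_inv s := rfl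

/-- Nat.card of a sigma type over a fintype. -/
lemma nat_card_sigma {ι : Type*} [Fintype ι] (g : ι → Type*) [∀ i, Finite (g i)] :
    Nat.card (Σ i : ι, g i) = ∑ i : ι, Nat.card (g i) := by
  classical
  have : ∀ i, Fintype (g i) := fun i => Fintype.ofFinite _
  rw [Nat.card_eq_fintype_card, Fintype.card_sigma]
  simp [Nat.card_eq_fintype_card]

/-- The distinguished vector `e₀`. -/
noncomputable def e₀ (F : Type) [Field F] (n : ℕ) : Fin (n + 1) → F := Pi.single 0 1

lemma e₀_ne_zero : e₀ F n ≠ 0 := by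
  intro h
  have := congrFun h 0
  simp [e₀] at this

/-- Transitivity: every nonzero vector is `g *ᵥ e₀` for some invertible `g`. -/
lemma exists_glMap_e₀ (v : Fin (n + 1) → F) (hv : v ≠ 0) :
    ∃ g : GL (Fin (n + 1)) F, g.val.mulVec (e₀ F n) = v := by
  classical
  obtain ⟨i, hi⟩ : ∃ i, v i ≠ 0 := by
    by_contra h
    push_neg at h
    exact hv (funext fun i => h i)
  set M : Matrix (Fin (n + 1)) (Fin (n + 1)) F := (1 : Matrix _ _ F).updateCol i v with hM
  have hdetM : M.det = v i := by
    rw [hM, ← Matrix.cramer_apply, Matrix.cramer_one]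
    rfl
  set N : Matrix (Fin (n + 1)) (Fin (n + 1)) F := M.submatrix id (Equiv.swap 0 i) with hN
  have hdetN : N.det = Equiv.Perm.sign (Equiv.swap 0 i) * M.det := by
    rw [hN]
    exact Matrix.det_permute' _ _
  have hdet : IsUnit N.det := by
    rw [hdetN, hdetM]
    rcases Int.units_eq_one_or (Equiv.Perm.sign (Equiv.swap 0 i)) with h | h <;>
      · rw [h]
        simp [isUnit_iff_ne_zero, hi]
  obtain ⟨g, hg⟩ := (Matrix.isUnit_iff_isUnit_det N).mpr hdet
  refine ⟨g, ?_⟩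
  rw [hg]
  funext j
  have : N.mulVec (e₀ F n) j = N j 0 := by
    simp [e₀, Matrix.mulVec_single]
  rw [this, hN, hM]
  simp [Matrix.submatrix_apply, Equiv.swap_apply_left, Matrix.updateCol_apply]

lemma mulVec_ne_zero (g : GL (Fin (n + 1)) F) {v : Fin (n + 1) → F} (hv : v ≠ 0) :
    g.val.mulVec v ≠ 0 := by
  intro h
  apply hv
  have := congrArg (fun w => (↑g⁻¹ : Matrix (Fin (n + 1)) (Fin (n + 1)) F).mulVec w) h
  simp only [Matrix.mulVec_mulVec, Matrix.mulVec_zero] at this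
  rw [← Units.val_mul, inv_mul_cancel, Units.val_one, Matrix.one_mulVec] at this
  exact this

lemma mulVec_glMul (g x : GL (Fin (n + 1)) F) (v : Fin (n + 1) → F) :
    (g * x).val.mulVec v = g.val.mulVec (x.val.mulVec v) := by
  rw [Units.val_mul, ← Matrix.mulVec_mulVec]

/-- rank-nullity in the form we need. -/
lemma finrank_ker_eq (M : Matrix (Fin (n + 1)) (Fin (n + 1)) F) :
    Module.finrank F (LinearMap.ker (Matrix.toLin' M)) = (n + 1) - M.rank := by
  have h := LinearMap.finrank_range_add_finrank_ker (Matrix.toLin' M)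
  rw [Module.finrank_fin_fun] at h
  have hr : M.rank = Module.finrank F (LinearMap.range (Matrix.toLin' M)) := by
    rw [Matrix.toLin'_apply']; rfl
  omega

/-- conjugate matrices shifted by a scalar have equal rank. -/
lemma rank_conj_sub (β x : GL (Fin (n + 1)) F) (h : IsConj β x) (a : F) :
    ((x.val : Matrix (Fin (n + 1)) (Fin (n + 1)) F) - a • 1).rank
      = (β.val - a • 1).rank := by
  obtain ⟨c, hc⟩ := h
  set u : GL (Fin (n + 1)) F := (↑c : GL (Fin (n + 1)) F) with hu
  have hx : x = u * β * u⁻¹ := by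
    have h2 : u * β = x * u := hc
    rw [h2]
    group
  have hmat : (x.val : Matrix (Fin (n + 1)) (Fin (n + 1)) F) - a • 1
      = u.val * (β.val - a • 1) * (↑u⁻¹ : Matrix (Fin (n + 1)) (Fin (n + 1)) F) := by
    rw [hx]
    have h1 : (u * β * u⁻¹).val
        = u.val * β.val * (↑u⁻¹ : Matrix (Fin (n + 1)) (Fin (n + 1)) F) := by
      rw [Units.val_mul, Units.val_mul]
    rw [h1, Matrix.mul_sub, Matrix.sub_mul]
    congr 1
    rw [mul_smul_comm, Matrix.mul_one, Matrix.smul_mul]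
    congr 1
    rw [← Units.val_mul, mul_inv_cancel, Units.val_one]
  rw [hmat]
  rw [Matrix.rank_mul_eq_left_of_isUnit_det _ _
    ((Matrix.isUnit_iff_isUnit_det _).mp (u⁻¹).isUnit),
    Matrix.rank_mul_eq_right_of_isUnit_det _ _
    ((Matrix.isUnit_iff_isUnit_det _).mp u.isUnit)]

/-- the eigenspace cardinality for an element conjugate to `β`. -/
lemma card_eigenspace (β x : GL (Fin (n + 1)) F) (h : IsConj β x) (a : Fˣ) :
    Nat.card {v : Fin (n + 1) → F // x.val.mulVec v = (a : F) • v}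
      = Fintype.card F ^
        Module.finrank F (LinearMap.ker (Matrix.toLin'
          (β.val - (a : F) • (1 : Matrix (Fin (n + 1)) (Fin (n + 1)) F)))) := by
  classical
  set K := LinearMap.ker (Matrix.toLin'
    (x.val - (a : F) • (1 : Matrix (Fin (n + 1)) (Fin (n + 1)) F))) with hK
  have hmem : ∀ v : Fin (n + 1) → F, v ∈ K ↔ x.val.mulVec v = (a : F) • v := by
    intro v
    rw [hK, LinearMap.mem_ker, Matrix.toLin'_apply, Matrix.sub_mulVec,
      Matrix.smul_mulVec, Matrix.one_mulVec, sub_eq_zero]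
  have e : {v : Fin (n + 1) → F // x.val.mulVec v = (a : F) • v} ≃ K :=
    Equiv.subtypeEquivRight (fun v => (hmem v).symm)
  rw [Nat.card_congr e]
  have : Fintype K := Fintype.ofFinite _
  rw [Nat.card_eq_fintype_card, Module.card_eq_pow_finrank (K := F) (V := K)]
  congr 1
  rw [finrank_ker_eq, finrank_ker_eq, rank_conj_sub β x h]

/-- counting nonzero elements of an eigenspace. -/
lemma card_eigenspace' (β x : GL (Fin (n + 1)) F) (h : IsConj β x) (a : Fˣ) :
    Nat.card {v : Fin (n + 1) → F // v ≠ 0 ∧ x.val.mulVec v = (a : F) • v}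
      = Fintype.card F ^
        Module.finrank F (LinearMap.ker (Matrix.toLin'
          (β.val - (a : F) • (1 : Matrix (Fin (n + 1)) (Fin (n + 1)) F)))) - 1 := by
  classical
  rw [← card_eigenspace β x h a]
  have e : {v : Fin (n + 1) → F // x.val.mulVec v = (a : F) • v}
      ≃ Option {v : Fin (n + 1) → F // v ≠ 0 ∧ x.val.mulVec v = (a : F) • v} := by
    refine Equiv.ofBijective
      (fun v => if hv : v.val = 0 then none else some ⟨v.val, hv, v.2⟩) ⟨?_, ?_⟩
    · rintro ⟨v, hv⟩ ⟨w, hw⟩ heq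
      by_cases h1 : v = 0
      · by_cases h2 : w = 0
        · subst h1; subst h2; rfl
        · simp [h1, h2] at heq
      · by_cases h2 : w = 0
        · simp [h1, h2] at heq
        · simp only [h1, h2, dite_eq_ite, if_neg, dif_neg, not_false_iff,
            Option.some.injEq, Subtype.mk.injEq] at heq
          exact Subtype.ext heq
    · rintro (_ | ⟨w, hw0, hw⟩)
      · exact ⟨⟨0, by simp⟩, by simp⟩
      · exact ⟨⟨w, hw⟩, by simp [hw0]⟩
  rw [Nat.card_congr e]
  have : Fintype {v : Fin (n + 1) → F // v ≠ 0 ∧ x.val.mulVec v = (a : F) • v} :=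
    Fintype.ofFinite _
  rw [Nat.card_eq_fintype_card, Nat.card_eq_fintype_card, Fintype.card_option]
  omega

lemma glMulVec_cancel (g : GL (Fin (n + 1)) F) (u : Fin (n + 1) → F) :
    g.val.mulVec ((↑g⁻¹ : Matrix (Fin (n + 1)) (Fin (n + 1)) F).mulVec u) = u := by
  rw [Matrix.mulVec_mulVec, ← Units.val_mul, mul_inv_cancel, Units.val_one,
    Matrix.one_mulVec]

lemma glMulVec_cancel' (g : GL (Fin (n + 1)) F) (u : Fin (n + 1) → F) :
    (↑g⁻¹ : Matrix (Fin (n + 1)) (Fin (n + 1)) F).mulVec (g.val.mulVec u) = u := by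
  rw [Matrix.mulVec_mulVec, ← Units.val_mul, inv_mul_cancel, Units.val_one,
    Matrix.one_mulVec]

lemma glMulVec_inj (g : GL (Fin (n + 1)) F) {u w : Fin (n + 1) → F}
    (h : g.val.mulVec u = g.val.mulVec w) : u = w := by
  have h2 := congrArg (fun z => (↑g⁻¹ : Matrix (Fin (n + 1)) (Fin (n + 1)) F).mulVec z) h
  rwa [glMulVec_cancel', glMulVec_cancel'] at h2

lemma mulVec_e₀ (x : GL (Fin (n + 1)) F) :
    x.val.mulVec (e₀ F n) = fun j => x.val j 0 := by
  funext j
  simp [e₀, Matrix.mulVec_single]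

lemma isPar_iff (x : GL (Fin (n + 1)) F) :
    IsPar x ↔ ∃ a : Fˣ, x.val.mulVec (e₀ F n) = (a : F) • e₀ F n := by
  constructor
  · rintro ⟨h1, h2⟩
    refine ⟨Units.mk0 (x.val 0 0) h1, ?_⟩
    rw [mulVec_e₀]
    funext j
    by_cases hj : j = 0
    · subst hj; simp [e₀]
    · simp [e₀, h2 j hj, Pi.single_apply, hj]
  · rintro ⟨a, ha⟩
    rw [mulVec_e₀] at ha
    constructor
    · have := congrFun ha 0
      simp only [e₀, Pi.smul_apply, Pi.single_eq_same, smul_eq_mul, mul_one] at this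
      rw [this]
      exact a.ne_zero
    · intro j hj
      have := congrFun ha j
      simpa [e₀, Pi.single_apply, hj] using this

/-- the cardinality of the set of elements of the class of `β` having `v` as an eigenvector
does not depend on the nonzero vector `v`. -/
lemma card_A_eq (β : GL (Fin (n + 1)) F) (v : Fin (n + 1) → F) (hv : v ≠ 0) :
    Nat.card {x : GL (Fin (n + 1)) F // IsConj β x ∧
        ∃ a : Fˣ, x.val.mulVec v = (a : F) • v}
      = Nat.card {x : GL (Fin (n + 1)) F // IsConj β x ∧
        ∃ a : Fˣ, x.val.mulVec (e₀ F n) = (a : F) • e₀ F n} := by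
  obtain ⟨g, hg⟩ := exists_glMap_e₀ v hv
  have hcon : ∀ y : GL (Fin (n + 1)) F, IsConj y (g⁻¹ * (y * g)) := by
    intro y
    rw [isConj_iff]
    exact ⟨g⁻¹, by group⟩
  refine Nat.card_congr (((Equiv.mulRight g).trans (Equiv.mulLeft g⁻¹)).subtypeEquiv ?_)
  intro x
  simp only [Equiv.trans_apply, Equiv.coe_mulRight, Equiv.coe_mulLeft]
  constructor
  · rintro ⟨h1, a, ha⟩
    refine ⟨h1.trans (hcon x), a, ?_⟩
    rw [mulVec_glMul, mulVec_glMul, hg, ha, Matrix.mulVec_smul]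
    have : g⁻¹.val.mulVec (g.val.mulVec (e₀ F n)) = e₀ F n := glMulVec_cancel' g _
    rw [hg] at this
    rw [this]
  · rintro ⟨h1, a, ha⟩
    have h2 : IsConj β x := h1.trans (hcon x).symm
    refine ⟨h2, a, ?_⟩
    rw [mulVec_glMul, mulVec_glMul, hg] at ha
    have := congrArg (fun z => g.val.mulVec z) ha
    simp only [glMulVec_cancel] at this
    rw [this, Matrix.mulVec_smul, hg]

lemma smul_e₀_inj {a b : Fˣ} (h : (a : F) • e₀ F n = (b : F) • e₀ F n) : a = b := by
  have := congrFun h 0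
  simp only [e₀, Pi.smul_apply, Pi.single_eq_same, smul_eq_mul, mul_one] at this
  exact Units.ext this

/-- scalar matrices as elements of `GL`. -/
noncomputable def scUnit (a : Fˣ) : GL (Fin (n + 1)) F where
  val := (a : F) • 1
  inv := ((a⁻¹ : Fˣ) : F) • 1
  val_inv := by
    rw [Matrix.smul_mul, mul_smul_comm, Matrix.one_mul, smul_smul]
    norm_num
  inv_val := by
    rw [Matrix.smul_mul, mul_smul_comm, Matrix.one_mul, smul_smul]
    norm_num

lemma card_fiber_scalar (a : Fˣ) :
    Nat.card {x : GL (Fin (n + 1)) F // x.val.mulVec (e₀ F n) = (a : F) • e₀ F n}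
      = Nat.card {x : GL (Fin (n + 1)) F // x.val.mulVec (e₀ F n) = e₀ F n} := by
  refine (Nat.card_congr ((Equiv.mulLeft (scUnit a : GL (Fin (n + 1)) F)).subtypeEquiv ?_)).symm
  intro x
  simp only [Equiv.coe_mulLeft]
  have hsc : (scUnit a * x : GL (Fin (n + 1)) F).val.mulVec (e₀ F n)
      = (a : F) • x.val.mulVec (e₀ F n) := by
    rw [mulVec_glMul]
    show ((a : F) • (1 : Matrix (Fin (n + 1)) (Fin (n + 1)) F)).mulVec _ = _
    rw [Matrix.smul_mulVec, Matrix.one_mulVec]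
  constructor
  · intro h
    rw [hsc, h]
  · intro h
    rw [hsc] at h
    exact smul_right_injective (Fin (n + 1) → F) a.ne_zero h

lemma card_fiber_vec (v : Fin (n + 1) → F) (hv : v ≠ 0) :
    Nat.card {x : GL (Fin (n + 1)) F // x.val.mulVec (e₀ F n) = v}
      = Nat.card {x : GL (Fin (n + 1)) F // x.val.mulVec (e₀ F n) = e₀ F n} := by
  obtain ⟨g, hg⟩ := exists_glMap_e₀ v hv
  refine (Nat.card_congr ((Equiv.mulLeft (g : GL (Fin (n + 1)) F)).subtypeEquiv ?_)).symm
  intro x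
  simp only [Equiv.coe_mulLeft]
  constructor
  · intro h
    rw [mulVec_glMul, h, hg]
  · intro h
    rw [mulVec_glMul] at h
    rw [← hg] at h
    exact glMulVec_inj g h

/-- |GL| = m * S₀ -/
lemma card_GL_eq :
    Nat.card (GL (Fin (n + 1)) F)
      = Nat.card {v : Fin (n + 1) → F // v ≠ 0} *
        Nat.card {x : GL (Fin (n + 1)) F // x.val.mulVec (e₀ F n) = e₀ F n} := by
  classical
  have e : (Σ v : {v : Fin (n + 1) → F // v ≠ 0},
      {x : GL (Fin (n + 1)) F // x.val.mulVec (e₀ F n) = v.val}) ≃ GL (Fin (n + 1)) F := by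
    refine Equiv.ofBijective (fun s => s.2.1) ⟨?_, ?_⟩
    · rintro ⟨⟨v, hv⟩, ⟨x, hx⟩⟩ ⟨⟨w, hw⟩, ⟨y, hy⟩⟩ heq
      simp only at heq
      subst heq
      obtain rfl : v = w := hx.symm.trans hy
      rfl
    · intro x
      exact ⟨⟨⟨x.val.mulVec (e₀ F n), mulVec_ne_zero x e₀_ne_zero⟩, ⟨x, rfl⟩⟩, rfl⟩
  rw [← Nat.card_congr e, nat_card_sigma]
  rw [Finset.sum_congr rfl (fun v _ => card_fiber_vec v.val v.2)]
  rw [Finset.sum_const, smul_eq_mul, Finset.card_univ, ← Nat.card_eq_fintype_card]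

/-- |P| = (q-1) * S₀ -/
lemma card_P_eq :
    Nat.card {x : GL (Fin (n + 1)) F // IsPar x}
      = (Fintype.card F - 1) *
        Nat.card {x : GL (Fin (n + 1)) F // x.val.mulVec (e₀ F n) = e₀ F n} := by
  classical
  have h1 : Nat.card {x : GL (Fin (n + 1)) F // IsPar x}
      = Nat.card {x : GL (Fin (n + 1)) F //
          ∃ a : Fˣ, x.val.mulVec (e₀ F n) = (a : F) • e₀ F n} :=
    Nat.card_congr (Equiv.subtypeEquivRight (fun x => isPar_iff x))
  rw [h1]
  refine ((nat_card_exists_eq_sum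
      (fun (a : Fˣ) (x : GL (Fin (n + 1)) F) =>
        x.val.mulVec (e₀ F n) = (a : F) • e₀ F n)
      (fun a b x ha hb => smul_e₀_inj (by rw [← ha, ← hb]))).trans ?_)
  rw [Finset.sum_congr rfl (fun a _ => card_fiber_scalar a)]
  rw [Finset.sum_const, smul_eq_mul, Finset.card_univ, Fintype.card_units]

/-- The double counting identity. -/
lemma double_count (β : GL (Fin (n + 1)) F) (f : Fˣ → ℕ)
    (hf : ∀ a : Fˣ, f a =
      Module.finrank F (LinearMap.ker (Matrix.toLin'
        (β.val - (a : F) • (1 : Matrix (Fin (n + 1)) (Fin (n + 1)) F))))) :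
    Nat.card {x : GL (Fin (n + 1)) F // IsConj β x} *
        (∑ a : Fˣ, (Fintype.card F ^ f a - 1))
      = Nat.card {v : Fin (n + 1) → F // v ≠ 0} *
        Nat.card {x : GL (Fin (n + 1)) F // IsConj β x ∧
          ∃ a : Fˣ, x.val.mulVec (e₀ F n) = (a : F) • e₀ F n} := by
  classical
  -- count pairs (x, v) fibered over x
  have hside1 : Nat.card {p : GL (Fin (n + 1)) F × (Fin (n + 1) → F) //
        IsConj β p.1 ∧ ∃ a : Fˣ, p.2 ≠ 0 ∧ p.1.val.mulVec p.2 = (a : F) • p.2}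
      = Nat.card {x : GL (Fin (n + 1)) F // IsConj β x} *
        (∑ a : Fˣ, (Fintype.card F ^ f a - 1)) := by
    rw [Nat.card_congr (sigmaFst (IsConj β)
      (fun x v => ∃ a : Fˣ, v ≠ 0 ∧ x.val.mulVec v = (a : F) • v)), nat_card_sigma]
    have hx : ∀ x : {x : GL (Fin (n + 1)) F // IsConj β x},
        Nat.card {v : Fin (n + 1) → F //
            ∃ a : Fˣ, v ≠ 0 ∧ x.val.val.mulVec v = (a : F) • v}
          = ∑ a : Fˣ, (Fintype.card F ^ f a - 1) := by
      rintro ⟨x, hx⟩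
      refine ((nat_card_exists_eq_sum
          (fun (a : Fˣ) (v : Fin (n + 1) → F) =>
            v ≠ 0 ∧ x.val.mulVec v = (a : F) • v) ?_).trans ?_)
      case refine_2 =>
        refine Finset.sum_congr rfl (fun a _ => ?_)
        rw [card_eigenspace' β x hx a, hf a]
      rintro a b v ⟨hv, ha⟩ ⟨-, hb⟩
      obtain ⟨k, hk⟩ : ∃ k, v k ≠ 0 := by
        by_contra hcon
        push_neg at hcon
        exact hv (funext fun k => hcon k)
      have := (congrFun ha k).symm.trans (congrFun hb k)
      simp only [Pi.smul_apply, smul_eq_mul] at this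
      exact Units.ext (mul_right_cancel₀ hk this)
    rw [Finset.sum_congr rfl (fun x _ => hx x), Finset.sum_const, smul_eq_mul,
      Finset.card_univ, ← Nat.card_eq_fintype_card]
  -- count pairs fibered over v
  have hswap : {p : GL (Fin (n + 1)) F × (Fin (n + 1) → F) //
        IsConj β p.1 ∧ ∃ a : Fˣ, p.2 ≠ 0 ∧ p.1.val.mulVec p.2 = (a : F) • p.2}
      ≃ {p : (Fin (n + 1) → F) × GL (Fin (n + 1)) F //
        p.1 ≠ 0 ∧ (IsConj β p.2 ∧ ∃ a : Fˣ, p.2.val.mulVec p.1 = (a : F) • p.1)} := by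
    refine (Equiv.prodComm _ _).subtypeEquiv (fun p => ?_)
    constructor
    · rintro ⟨h1, a, hv, ha⟩
      exact ⟨hv, h1, a, ha⟩
    · rintro ⟨hv, h1, a, ha⟩
      exact ⟨h1, a, hv, ha⟩
  have hside2 : Nat.card {p : (Fin (n + 1) → F) × GL (Fin (n + 1)) F //
        p.1 ≠ 0 ∧ (IsConj β p.2 ∧ ∃ a : Fˣ, p.2.val.mulVec p.1 = (a : F) • p.1)}
      = Nat.card {v : Fin (n + 1) → F // v ≠ 0} *
        Nat.card {x : GL (Fin (n + 1)) F // IsConj β x ∧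
          ∃ a : Fˣ, x.val.mulVec (e₀ F n) = (a : F) • e₀ F n} := by
    rw [Nat.card_congr (sigmaFst (fun v : Fin (n + 1) → F => v ≠ 0)
      (fun v x => IsConj β x ∧ ∃ a : Fˣ, x.val.mulVec v = (a : F) • v)), nat_card_sigma]
    rw [Finset.sum_congr rfl (fun v _ => card_A_eq β v.val v.2)]
    rw [Finset.sum_const, smul_eq_mul, Finset.card_univ, ← Nat.card_eq_fintype_card]
  rw [← hside1, Nat.card_congr hswap, hside2]

end Aux

/-- The number of elements of `P(n,q)` lying in the conjugacy class of `β ∈ GL(n+1, F_q)`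
equals `(|P(n,q)|/(q-1)) ⬝ (Σ_{a ∈ F_q^*} (q^{f_a} - 1)) ⬝ |C| / |GL(n+1,q)|`, where
`f_a = dim ker (β - aI)`.  (Stated multiplied through by `(q-1) ⬝ |GL(n+1,q)|`.) -/
theorem parabolic_conjClass_count (F : Type) [Field F] [Fintype F] [DecidableEq F] (q : ℕ)
    (hq : q = Fintype.card F) (n : ℕ) (β : GL (Fin (n + 1)) F) (f : Fˣ → ℕ)
    (hf : ∀ a : Fˣ, f a =
      Module.finrank F (LinearMap.ker (Matrix.toLin'
        (β.val - (a : F) • (1 : Matrix (Fin (n + 1)) (Fin (n + 1)) F))))) :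
    Nat.card {x : GL (Fin (n + 1)) F // IsPar x ∧ IsConj β x} * (q - 1) *
        Nat.card (GL (Fin (n + 1)) F) =
      Nat.card {x : GL (Fin (n + 1)) F // IsPar x} * (∑ a : Fˣ, (q ^ f a - 1)) *
        Nat.card {x : GL (Fin (n + 1)) F // IsConj β x} := by
  classical
  subst hq
  have hN : Nat.card {x : GL (Fin (n + 1)) F // IsPar x ∧ IsConj β x}
      = Nat.card {x : GL (Fin (n + 1)) F // IsConj β x ∧
          ∃ a : Fˣ, x.val.mulVec (e₀ F n) = (a : F) • e₀ F n} := by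
    refine Nat.card_congr (Equiv.subtypeEquivRight (fun x => ?_))
    rw [isPar_iff x, and_comm]
  have hdc := double_count β f hf
  rw [← hN] at hdc
  rw [card_GL_eq, card_P_eq]
  set N := Nat.card {x : GL (Fin (n + 1)) F // IsPar x ∧ IsConj β x} with hN'
  set C := Nat.card {x : GL (Fin (n + 1)) F // IsConj β x} with hC'
  set m := Nat.card {v : Fin (n + 1) → F // v ≠ 0} with hm'
  set S := Nat.card {x : GL (Fin (n + 1)) F // x.val.mulVec (e₀ F n) = e₀ F n} with hS'
  set St := ∑ a : Fˣ, (Fintype.card F ^ f a - 1) with hSt'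
  calc N * (Fintype.card F - 1) * (m * S)
      = (Fintype.card F - 1) * S * (m * N) := by ring
    _ = (Fintype.card F - 1) * S * (C * St) := by rw [← hdc]
    _ = (Fintype.card F - 1) * S * St * C := by ring
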